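/- Let P and Q be orthogonal projections such that P − Q is in the Schatten class 𝔖_{2m+1} for some integer m ≥ 0 (so (P−Q)^{2m+1} is trace class). Then tr[(P−Q)^{2m+1}] = tr[(P−Q)^{2l+1}] for every integer l ≥ m, and this common value equals ind(P,Q), an integer. -/

import Mathlib

/-- Hilbert–Schmidt property. -/
def IsHilbertSchmidt {H : Type*} [NormedAddCommGroup H] [InnerProductSpace ℂ H]
    [CompleteSpace H] (T : H →L[ℂ] H) : Prop :=
  ∃ (ι : Type) (e : HilbertBasis ι ℂ H), Summable fun i => ‖T (e i)‖ ^ 2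

/-- Trace class via factorization into two Hilbert–Schmidt operators. -/
def IsTraceClass {H : Type*} [NormedAddCommGroup H] [InnerProductSpace ℂ H]
    [CompleteSpace H] (T : H →L[ℂ] H) : Prop :=
  ∃ A B : H →L[ℂ] H, IsHilbertSchmidt A ∧ IsHilbertSchmidt B ∧ T = A.comp B

/-- The index of a pair of orthogonal projections,
`ind(P,Q) = dim(Ker Q ∩ Ran P) − dim(Ker P ∩ Ran Q)`. -/
noncomputable def pairIndex {H : Type*} [NormedAddCommGroup H] [InnerProductSpace ℂ H]
    [CompleteSpace H] (P Q : H →L[ℂ] H) : ℤ :=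
  (Module.finrank ℂ ↥(LinearMap.ker (Q : H →ₗ[ℂ] H) ⊓ LinearMap.range (P : H →ₗ[ℂ] H)) : ℤ) -
    (Module.finrank ℂ ↥(LinearMap.ker (P : H →ₗ[ℂ] H) ⊓ LinearMap.range (Q : H →ₗ[ℂ] H)) : ℤ)

/-!
Write `A = P - Q` and `B = 1 - P - Q`. Then `A² + B² = 1` and `BA = -AB`, so `B` anticommutes with
every odd power of `A`, and cyclicity of the trace gives `tr (A^(2l+1) B²) = 0`; hence
`tr A^(2l+1) = tr A^(2l+3)` as soon as `A^(2l+1)` is trace class, i.e. for `l ≥ m`.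

On the other hand `A` is a self-adjoint contraction, and `ker (A ∓ 1)` are `Ker Q ∩ Ran P` and
`Ker P ∩ Ran Q`. They are finite-dimensional because the Hilbert–Schmidt operator `A^(2m+1)` is
isometric on them. By the mean ergodic theorem applied to `A²`, `A^n x → 0` for `x` orthogonal to
both, so `⟪x, A^(2l+1) x⟫ → ⟪x, (Π₊ - Π₋) x⟫` with `Π±` the orthogonal projections onto
`ker (A ∓ 1)`. Dominated convergence in a Hilbert basis, with the summable bound
`‖⟪x, A^(2l+1) x⟫‖ ≤ ‖A^(m+1) x‖²`, shows that the constant trace equals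
`tr Π₊ - tr Π₋ = ind (P, Q)`.
-/

open Filter Topology Module
open scoped InnerProductSpace
open ContinuousLinearMap (adjoint)

section Ring
variable {R : Type*} [Ring R] {P Q A B : R}

theorem IsIdempotentElem.sub_sq_add_one_sub_sub_sq (hP : IsIdempotentElem P)
    (hQ : IsIdempotentElem Q) : (P - Q) ^ 2 + (1 - P - Q) ^ 2 = 1 := by
  have h : (P - Q) ^ 2 + (1 - P - Q) ^ 2 = 2 * (P * P - P) + 2 * (Q * Q - Q) + 1 := by
    noncomm_ring
  rw [h, hP.eq, hQ.eq]
  simp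

theorem IsIdempotentElem.one_sub_sub_mul_sub (hP : IsIdempotentElem P)
    (hQ : IsIdempotentElem Q) :
    (1 - P - Q) * (P - Q) = -((P - Q) * (1 - P - Q)) := by
  have h : (1 - P - Q) * (P - Q) + (P - Q) * (1 - P - Q) = 2 * (P - P * P) - 2 * (Q - Q * Q) := by
    noncomm_ring
  rw [hP.eq, hQ.eq, sub_self, sub_self, mul_zero, sub_zero] at h
  exact eq_neg_of_add_eq_zero_left h

theorem mul_pow_odd_of_mul_eq_neg (h : B * A = -(A * B)) (k : ℕ) :
    B * A ^ (2 * k + 1) = -(A ^ (2 * k + 1) * B) := by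
  have hsq : Commute B (A ^ 2) := by
    rw [Commute, SemiconjBy, sq, ← mul_assoc, h, neg_mul, mul_assoc, h, mul_neg, neg_neg,
      mul_assoc]
  rw [pow_succ, pow_mul, ← mul_assoc, (hsq.pow_right k).eq, mul_assoc, h, mul_neg, mul_assoc]

end Ring

theorem summable_mul_of_summable_sq {ι : Type*} {a b : ι → ℝ} (ha : Summable fun i => a i ^ 2)
    (hb : Summable fun i => b i ^ 2) : Summable fun i => a i * b i := by
  refine Summable.of_norm_bounded ((ha.add hb).div_const 2) fun i => ?_
  rw [Real.norm_eq_abs, abs_mul, ← sq_abs (a i), ← sq_abs (b i)]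
  nlinarith [two_mul_le_add_sq |a i| |b i|]

theorem Antitone.tendsto_zero_of_tendsto_cesaro {u : ℕ → ℝ} (hu : Antitone u)
    (h0 : ∀ n, 0 ≤ u n)
    (h : Tendsto (fun N : ℕ => (N : ℝ)⁻¹ * ∑ n ∈ Finset.range N, u n) atTop (𝓝 0)) :
    Tendsto u atTop (𝓝 0) := by
  refine squeeze_zero h0 (fun N => ?_) (h.comp (tendsto_add_atTop_nat 1))
  have hsum : ((N + 1 : ℕ) : ℝ) * u N ≤ ∑ n ∈ Finset.range (N + 1), u n := by
    simpa using Finset.card_nsmul_le_sum _ u (u N) fun n hn =>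
      hu (Nat.lt_succ_iff.1 (Finset.mem_range.1 hn))
  rw [Function.comp_apply, le_inv_mul_iff₀ (by positivity)]
  exact hsum

section HilbertBasis
variable {𝕜 E ι κ : Type*} [RCLike 𝕜] [NormedAddCommGroup E] [InnerProductSpace 𝕜 E]

theorem HilbertBasis.hasSum_norm_inner_sq (b : HilbertBasis ι 𝕜 E) (x : E) :
    HasSum (fun i => ‖⟪b i, x⟫_𝕜‖ ^ 2) (‖x‖ ^ 2) := by
  have h := b.hasSum_inner_mul_inner x x
  simp only [← inner_conj_symm x (b _), RCLike.conj_mul, inner_self_eq_norm_sq_to_K] at h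
  exact_mod_cast h

theorem summable_norm_inner_sq_prod (e : HilbertBasis ι 𝕜 E) (f : HilbertBasis κ 𝕜 E)
    {T : E →L[𝕜] E} (hT : Summable fun i => ‖T (e i)‖ ^ 2) :
    Summable fun p : ι × κ => ‖⟪f p.2, T (e p.1)⟫_𝕜‖ ^ 2 :=
  (summable_prod_of_nonneg fun _ => by positivity).2
    ⟨fun i => (f.hasSum_norm_inner_sq (T (e i))).summable,
      hT.congr fun i => (f.hasSum_norm_inner_sq (T (e i))).tsum_eq.symm⟩

theorem summable_norm_adjoint_apply_sq [CompleteSpace E] (e : HilbertBasis ι 𝕜 E)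
    (f : HilbertBasis κ 𝕜 E) {T : E →L[𝕜] E} (hT : Summable fun i => ‖T (e i)‖ ^ 2) :
    Summable fun j => ‖adjoint T (f j)‖ ^ 2 := by
  have hswap := (Equiv.prodComm κ ι).summable_iff.2 (summable_norm_inner_sq_prod e f hT)
  refine ((summable_prod_of_nonneg fun _ => sq_nonneg _).1 hswap).2.congr fun j => ?_
  rw [← (e.hasSum_norm_inner_sq (adjoint T (f j))).tsum_eq]
  refine tsum_congr fun i => ?_
  simp only [Equiv.prodComm_apply, Prod.fst_swap, Prod.snd_swap]
  rw [← ContinuousLinearMap.adjoint_inner_left, norm_inner_symm]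

theorem HilbertBasis.hasSum_inner_starProjection (b : HilbertBasis ι 𝕜 E) (K : Submodule 𝕜 E)
    [FiniteDimensional 𝕜 K] :
    HasSum (fun i => ⟪b i, K.starProjection (b i)⟫_𝕜) (finrank 𝕜 K) := by
  set u := stdOrthonormalBasis 𝕜 K
  have hterm : ∀ i, ⟪b i, K.starProjection (b i)⟫_𝕜
      = ∑ j, ⟪(u j : E), b i⟫_𝕜 * ⟪b i, (u j : E)⟫_𝕜 := fun i => by
    simp [u.starProjection_eq_sum_rankOne, inner_sum, inner_smul_right]
  have h := hasSum_sum (s := Finset.univ) fun j _ => b.hasSum_inner_mul_inner (u j : E) (u j : E)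
  simpa [← hterm, Submodule.norm_coe, u.orthonormal.1] using h

end HilbertBasis

section Operators
variable {𝕜 E : Type*} [RCLike 𝕜] [NormedAddCommGroup E] [InnerProductSpace 𝕜 E]
  {A : E →L[𝕜] E}

theorem norm_pow_apply_le (hA1 : ‖A‖ ≤ 1) (n : ℕ) (x : E) : ‖(A ^ n) x‖ ≤ ‖x‖ := by
  induction n with
  | zero => simp
  | succ n ih =>
    rw [pow_succ', mul_apply_eq_comp]
    exact (A.le_of_opNorm_le hA1 _).trans (by rw [one_mul]; exact ih)

open Module.End in
theorem pow_apply_of_mem_eigenspace {μ : 𝕜} {x : E} (hx : x ∈ eigenspace (A : E →ₗ[𝕜] E) μ)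
    (n : ℕ) : (A ^ n) x = μ ^ n • x := by
  induction n with
  | zero => simp
  | succ n ih => rw [pow_succ', mul_apply_eq_comp, ih, map_smul, ← ContinuousLinearMap.coe_coe,
      mem_eigenspace_iff.1 hx, smul_smul, ← pow_succ]

open Module.End in
theorem eqLocus_sq_one_le_eigenspace_sup (A : E →L[𝕜] E) :
    (A ^ 2).eqLocus (1 : E →L[𝕜] E)
      ≤ eigenspace (A : E →ₗ[𝕜] E) 1 ⊔ eigenspace (A : E →ₗ[𝕜] E) (-1) := by
  intro z hz
  have hAA : A (A z) = z := by simpa [sq] using hz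
  have hsplit : z = (2 : 𝕜)⁻¹ • (z + A z) + (2 : 𝕜)⁻¹ • (z - A z) := by module
  rw [hsplit]
  refine Submodule.add_mem_sup (Submodule.smul_mem _ _ ?_) (Submodule.smul_mem _ _ ?_)
  · rw [mem_eigenspace_iff, one_smul]
    simp [hAA, add_comm]
  · rw [mem_eigenspace_iff, neg_one_smul]
    simp [hAA]

theorem Submodule.IsOrtho.sub_starProjection_sub_starProjection_mem {U V : Submodule 𝕜 E}
    [U.HasOrthogonalProjection] [V.HasOrthogonalProjection] (hUV : U ⟂ V) (x : E) :
    x - U.starProjection x - V.starProjection x ∈ (U ⊔ V)ᗮ := by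
  rw [← Submodule.inf_orthogonal]
  refine ⟨Submodule.sub_mem _ (U.sub_starProjection_mem_orthogonal x)
    (hUV.ge (V.starProjection_apply_mem x)), ?_⟩
  rw [sub_right_comm]
  exact Submodule.sub_mem _ (V.sub_starProjection_mem_orthogonal x)
    (hUV.le (U.starProjection_apply_mem x))

end Operators

section SelfAdjointContraction
variable {𝕜 E : Type*} [RCLike 𝕜] [NormedAddCommGroup E] [InnerProductSpace 𝕜 E]
  [CompleteSpace E] {A : E →L[𝕜] E}

theorem IsSelfAdjoint.inner_pow_two_mul_apply (hA : IsSelfAdjoint A) (n : ℕ) (x : E) :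
    ⟪x, (A ^ (2 * n)) x⟫_𝕜 = ((‖(A ^ n) x‖ ^ 2 : ℝ) : 𝕜) := by
  rw [two_mul, pow_add, mul_apply_eq_comp, ← ContinuousLinearMap.adjoint_inner_left,
    (hA.pow n).adjoint_eq, inner_self_eq_norm_sq_to_K]
  norm_cast

theorem IsSelfAdjoint.inner_sq_apply (hA : IsSelfAdjoint A) (x : E) :
    ⟪x, (A ^ 2) x⟫_𝕜 = ((‖A x‖ ^ 2 : ℝ) : 𝕜) := by
  simpa using hA.inner_pow_two_mul_apply 1 x

theorem tendsto_pow_apply_of_mem_orthogonal (hA : IsSelfAdjoint A) (hA1 : ‖A‖ ≤ 1) {y : E}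
    (hy : y ∈ ((A ^ 2).eqLocus (1 : E →L[𝕜] E))ᗮ) :
    Tendsto (fun n => (A ^ n) y) atTop (𝓝 0) := by
  set a : ℕ → ℝ := fun n => ‖(A ^ n) y‖ ^ 2
  have ha : Antitone a := antitone_nat_of_succ_le fun n => by
    have h := A.le_of_opNorm_le hA1 ((A ^ n) y)
    rw [one_mul, ← mul_apply_eq_comp, ← pow_succ'] at h
    exact pow_le_pow_left₀ (norm_nonneg _) h 2
  have hT : ‖A ^ 2‖ ≤ 1 := (norm_pow_le' A two_pos).trans (pow_le_one₀ (norm_nonneg A) hA1)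
  -- `a n = ⟪y, (A²)ⁿ y⟫`, so by the mean ergodic theorem for `A²` its Cesàro means tend to
  -- `⟪y, π y⟫ = 0`, where `π` projects onto the fixed space of `A²`.
  have hmean := (tendsto_const_nhds (x := y)).inner (𝕜 := 𝕜)
    ((A ^ 2).tendsto_birkhoffAverage_orthogonalProjection hT y)
  rw [Submodule.orthogonalProjectionOnto_eq_zero_iff.2 hy] at hmean
  have hcesaro : ∀ N, ⟪y, birkhoffAverage 𝕜 ⇑(A ^ 2) id N y⟫_𝕜
      = RCLike.ofReal ((N : ℝ)⁻¹ * ∑ n ∈ Finset.range N, a n) := fun N => by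
    simp only [birkhoffAverage, birkhoffSum, id, ← FunLike.coe_pow_eq_iterate, ← pow_mul,
      inner_smul_right, inner_sum, hA.inner_pow_two_mul_apply]
    simp [a]
  simp only [hcesaro, ZeroMemClass.coe_zero, inner_zero_right] at hmean
  have ha0 := ha.tendsto_zero_of_tendsto_cesaro (fun n => sq_nonneg _)
    (by simpa only [Function.comp_def, RCLike.ofReal_re, map_zero] using
      (RCLike.continuous_re.tendsto _).comp hmean)
  rw [tendsto_zero_iff_norm_tendsto_zero]
  simpa [a] using ha0.sqrt

theorem IsSelfAdjoint.norm_inner_pow_odd_le (hA : IsSelfAdjoint A) (hA1 : ‖A‖ ≤ 1) {m l : ℕ}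
    (hml : m < l) (x : E) : ‖⟪x, (A ^ (2 * l + 1)) x⟫_𝕜‖ ≤ ‖(A ^ (m + 1)) x‖ ^ 2 := by
  have hinner : ⟪x, (A ^ (2 * l + 1)) x⟫_𝕜 = ⟪(A ^ l) x, A ((A ^ l) x)⟫_𝕜 := by
    rw [show 2 * l + 1 = l + (1 + l) by ring, pow_add, pow_add, pow_one, mul_apply_eq_comp,
      mul_apply_eq_comp, ← ContinuousLinearMap.adjoint_inner_left, (hA.pow l).adjoint_eq]
  have hl : ‖(A ^ l) x‖ ≤ ‖(A ^ (m + 1)) x‖ := by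
    rw [show l = (l - (m + 1)) + (m + 1) by omega, pow_add, mul_apply_eq_comp]
    exact norm_pow_apply_le hA1 _ _
  calc ‖⟪x, (A ^ (2 * l + 1)) x⟫_𝕜‖ ≤ ‖(A ^ l) x‖ * ‖A ((A ^ l) x)‖ := by
        rw [hinner]; exact norm_inner_le_norm _ _
    _ ≤ ‖(A ^ l) x‖ * ‖(A ^ l) x‖ := by
        gcongr; simpa using A.le_of_opNorm_le hA1 ((A ^ l) x)
    _ ≤ ‖(A ^ (m + 1)) x‖ ^ 2 := by rw [← sq]; gcongr

open Module.End in
theorem tendsto_inner_pow_odd (hA : IsSelfAdjoint A) (hA1 : ‖A‖ ≤ 1)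
    [(eigenspace (A : E →ₗ[𝕜] E) 1).HasOrthogonalProjection]
    [(eigenspace (A : E →ₗ[𝕜] E) (-1)).HasOrthogonalProjection] (x : E) :
    Tendsto (fun l => ⟪x, (A ^ (2 * l + 1)) x⟫_𝕜) atTop
      (𝓝 (⟪x, (eigenspace (A : E →ₗ[𝕜] E) 1).starProjection x⟫_𝕜
        - ⟪x, (eigenspace (A : E →ₗ[𝕜] E) (-1)).starProjection x⟫_𝕜)) := by
  set xp := (eigenspace (A : E →ₗ[𝕜] E) 1).starProjection x
  set xm := (eigenspace (A : E →ₗ[𝕜] E) (-1)).starProjection x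
  have hortho : eigenspace (A : E →ₗ[𝕜] E) 1 ⟂ eigenspace (A : E →ₗ[𝕜] E) (-1) :=
    hA.isSymmetric.orthogonalFamily_eigenspaces.isOrtho (by norm_num)
  have hy := Submodule.orthogonal_le (eqLocus_sq_one_le_eigenspace_sup A)
    (hortho.sub_starProjection_sub_starProjection_mem x)
  have hpow : ∀ l, (A ^ (2 * l + 1)) x = xp - xm + (A ^ (2 * l + 1)) (x - xp - xm) := fun l => by
    rw [map_sub, map_sub, pow_apply_of_mem_eigenspace (Submodule.starProjection_apply_mem _ x),
      pow_apply_of_mem_eigenspace (Submodule.starProjection_apply_mem _ x), one_pow, one_smul,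
      (Nat.odd_iff.2 (by omega)).neg_one_pow, neg_one_smul]
    abel
  have hdecay := (tendsto_pow_apply_of_mem_orthogonal hA hA1 hy).comp
    (tendsto_atTop_atTop.2 fun n => ⟨n, fun l hl => by omega⟩ : Tendsto (2 * · + 1) atTop atTop)
  have hlim := (tendsto_const_nhds (x := ⟪x, xp⟫_𝕜 - ⟪x, xm⟫_𝕜)).add
    ((tendsto_const_nhds (x := x)).inner (𝕜 := 𝕜) hdecay)
  rw [inner_zero_right, add_zero] at hlim
  refine hlim.congr fun l => ?_
  rw [Function.comp_apply, hpow, inner_add_right, inner_sub_right]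

open Module.End in
theorem tendsto_tsum_inner_pow_odd (hA : IsSelfAdjoint A) (hA1 : ‖A‖ ≤ 1)
    [(eigenspace (A : E →ₗ[𝕜] E) 1).HasOrthogonalProjection]
    [(eigenspace (A : E →ₗ[𝕜] E) (-1)).HasOrthogonalProjection] {ι : Type*} (e : ι → E) {m : ℕ}
    (hm : Summable fun i => ‖(A ^ (m + 1)) (e i)‖ ^ 2) :
    Tendsto (fun l => ∑' i, ⟪e i, (A ^ (2 * l + 1)) (e i)⟫_𝕜) atTop
      (𝓝 (∑' i, (⟪e i, (eigenspace (A : E →ₗ[𝕜] E) 1).starProjection (e i)⟫_𝕜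
        - ⟪e i, (eigenspace (A : E →ₗ[𝕜] E) (-1)).starProjection (e i)⟫_𝕜))) :=
  tendsto_tsum_of_dominated_convergence hm (fun i => tendsto_inner_pow_odd hA hA1 (e i))
    (eventually_atTop.2 ⟨m + 1, fun _ hl i => hA.norm_inner_pow_odd_le hA1 hl (e i)⟩)

end SelfAdjointContraction

section PairOfProjections
variable {𝕜 E : Type*} [RCLike 𝕜] [NormedAddCommGroup E] [InnerProductSpace 𝕜 E]
  [CompleteSpace E] {P Q : E →L[𝕜] E}

theorem norm_sub_apply_sq_add (hPsa : IsSelfAdjoint P) (hPi : IsIdempotentElem P)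
    (hQsa : IsSelfAdjoint Q) (hQi : IsIdempotentElem Q) (x : E) :
    ‖(P - Q) x‖ ^ 2 + ‖(1 - P - Q) x‖ ^ 2 = ‖x‖ ^ 2 := by
  have h := congrArg (fun T => ⟪x, T x⟫_𝕜) (hPi.sub_sq_add_one_sub_sub_sq hQi)
  simp only [add_apply, one_apply_eq_self, inner_add_right] at h
  rw [(hPsa.sub hQsa).inner_sq_apply, ((IsSelfAdjoint.one _).sub hPsa |>.sub hQsa).inner_sq_apply,
    inner_self_eq_norm_sq_to_K] at h
  exact_mod_cast h

theorem norm_sub_le_one (hPsa : IsSelfAdjoint P) (hPi : IsIdempotentElem P)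
    (hQsa : IsSelfAdjoint Q) (hQi : IsIdempotentElem Q) : ‖P - Q‖ ≤ 1 :=
  ContinuousLinearMap.opNorm_le_bound _ zero_le_one fun x => by
    rw [one_mul, ← pow_le_pow_iff_left₀ (norm_nonneg _) (norm_nonneg _) two_ne_zero]
    linarith [norm_sub_apply_sq_add hPsa hPi hQsa hQi x, sq_nonneg ‖(1 - P - Q) x‖]

open Module.End in
theorem ker_inf_range_eq_eigenspace_one (hPsa : IsSelfAdjoint P) (hPi : IsIdempotentElem P)
    (hQsa : IsSelfAdjoint Q) (hQi : IsIdempotentElem Q) :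
    LinearMap.ker (Q : E →ₗ[𝕜] E) ⊓ LinearMap.range (P : E →ₗ[𝕜] E)
      = eigenspace ((P - Q : E →L[𝕜] E) : E →ₗ[𝕜] E) 1 := by
  ext x
  simp only [Submodule.mem_inf, LinearMap.mem_ker, LinearMap.mem_range, mem_eigenspace_iff,
    one_smul, ContinuousLinearMap.coe_coe, sub_apply]
  constructor
  · rintro ⟨hQx, y, rfl⟩
    rw [hQx, sub_zero, ← mul_apply_eq_comp, hPi.eq]
  · intro hx
    have hB : (1 - P - Q) x = 0 := by
      have h := norm_sub_apply_sq_add hPsa hPi hQsa hQi x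
      rw [sub_apply, hx, add_eq_left] at h
      simpa using h
    simp only [sub_apply, one_apply_eq_self] at hB
    have hQx : Q x = 0 := by linear_combination (norm := module) (-(2 : 𝕜)⁻¹) • (hB + hx)
    rw [hQx, sub_zero] at hx
    exact ⟨hQx, x, hx⟩

open Module.End in
theorem ker_inf_range_eq_eigenspace_neg_one (hPsa : IsSelfAdjoint P) (hPi : IsIdempotentElem P)
    (hQsa : IsSelfAdjoint Q) (hQi : IsIdempotentElem Q) :
    LinearMap.ker (P : E →ₗ[𝕜] E) ⊓ LinearMap.range (Q : E →ₗ[𝕜] E)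
      = eigenspace ((P - Q : E →L[𝕜] E) : E →ₗ[𝕜] E) (-1) := by
  rw [ker_inf_range_eq_eigenspace_one hQsa hQi hPsa hPi]
  ext x
  simp only [mem_eigenspace_iff, ContinuousLinearMap.coe_coe, one_smul, neg_one_smul,
    ← neg_sub P Q, neg_apply, neg_eq_iff_eq_neg]

end PairOfProjections

namespace IsHilbertSchmidt
variable {H : Type*} [NormedAddCommGroup H] [InnerProductSpace ℂ H] [CompleteSpace H]
  {ι : Type*} {T : H →L[ℂ] H}

theorem summable (hT : IsHilbertSchmidt T) (e : HilbertBasis ι ℂ H) :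
    Summable fun i => ‖T (e i)‖ ^ 2 := by
  obtain ⟨_, e₀, h₀⟩ := hT
  simpa using summable_norm_adjoint_apply_sq e e (summable_norm_adjoint_apply_sq e₀ e h₀)

protected theorem adjoint (hT : IsHilbertSchmidt T) : IsHilbertSchmidt (adjoint T) := by
  obtain ⟨ι₀, e₀, h₀⟩ := hT
  exact ⟨ι₀, e₀, summable_norm_adjoint_apply_sq e₀ e₀ h₀⟩

theorem mul_left (hT : IsHilbertSchmidt T) (C : H →L[ℂ] H) :
    IsHilbertSchmidt (C * T) := by
  obtain ⟨ι₀, e₀, h₀⟩ := hT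
  refine ⟨ι₀, e₀, (h₀.mul_left (‖C‖ ^ 2)).of_nonneg_of_le (fun _ => by positivity) fun i => ?_⟩
  rw [← mul_pow]
  exact pow_le_pow_left₀ (norm_nonneg _) (C.le_opNorm _) 2

theorem mul_right (hT : IsHilbertSchmidt T) (C : H →L[ℂ] H) :
    IsHilbertSchmidt (T * C) := by
  simpa [ContinuousLinearMap.mul_def, ContinuousLinearMap.adjoint_comp] using
    (hT.adjoint.mul_left (adjoint C)).adjoint

theorem summable_norm_inner_mul {X Y : H →L[ℂ] H} (hX : IsHilbertSchmidt X)
    (hY : IsHilbertSchmidt Y) (e : HilbertBasis ι ℂ H) :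
    Summable fun i => ‖⟪e i, (X * Y) (e i)⟫_ℂ‖ := by
  refine (summable_mul_of_summable_sq (hX.adjoint.summable e) (hY.summable e)).of_nonneg_of_le
    (fun _ => norm_nonneg _) fun i => ?_
  rw [mul_apply_eq_comp, ← ContinuousLinearMap.adjoint_inner_left]
  exact norm_inner_le_norm _ _

theorem tsum_inner_mul_comm {X Y : H →L[ℂ] H} (hX : IsHilbertSchmidt X)
    (hY : IsHilbertSchmidt Y) (e : HilbertBasis ι ℂ H) :
    ∑' i, ⟪e i, (X * Y) (e i)⟫_ℂ = ∑' i, ⟪e i, (Y * X) (e i)⟫_ℂ := by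
  set F : ι × ι → ℂ := fun p => ⟪adjoint X (e p.1), e p.2⟫_ℂ * ⟪e p.2, Y (e p.1)⟫_ℂ
  have hF : Summable F := by
    refine Summable.of_norm ?_
    simp only [F, norm_mul]
    refine summable_mul_of_summable_sq ?_ (summable_norm_inner_sq_prod e e (hY.summable e))
    simpa only [norm_inner_symm] using summable_norm_inner_sq_prod e e (hX.adjoint.summable e)
  have hrow : ∀ i, HasSum (fun j => F (i, j)) ⟪e i, (X * Y) (e i)⟫_ℂ := fun i => by
    rw [mul_apply_eq_comp, ← ContinuousLinearMap.adjoint_inner_left]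
    exact e.hasSum_inner_mul_inner (adjoint X (e i)) (Y (e i))
  have hcol : ∀ j, HasSum (fun i => F (i, j)) ⟪e j, (Y * X) (e j)⟫_ℂ := fun j => by
    have h := e.hasSum_inner_mul_inner (adjoint Y (e j)) (X (e j))
    rw [ContinuousLinearMap.adjoint_inner_left, ← mul_apply_eq_comp Y X] at h
    refine h.congr_fun fun i => ?_
    simp only [F, ContinuousLinearMap.adjoint_inner_left, mul_comm]
  rw [(hF.hasSum.prod_fiberwise hrow).tsum_eq,
    (((Equiv.prodComm ι ι).hasSum_iff.2 hF.hasSum).prod_fiberwise hcol).tsum_eq]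

theorem summable_of_orthonormal (hT : IsHilbertSchmidt T) {v : ι → H} (hv : Orthonormal ℂ v) :
    Summable fun i => ‖T (v i)‖ ^ 2 := by
  obtain ⟨w, b, hvw, hb⟩ := hv.toSubtypeRange.exists_hilbertBasis_extension
  have hj : Function.Injective fun i => (⟨v i, hvw ⟨i, rfl⟩⟩ : w) :=
    fun i j hij => hv.linearIndependent.injective (congrArg Subtype.val hij)
  simpa [Function.comp_def, hb] using (hT.summable b).comp_injective hj

theorem finiteDimensional_of_norm_apply_eq (hT : IsHilbertSchmidt T) {V : Submodule ℂ H}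
    (hV : ∀ x ∈ V, ‖T x‖ = ‖x‖) : FiniteDimensional ℂ V := by
  by_contra hinf
  have : Infinite (Basis.ofVectorSpaceIndex ℂ V) :=
    not_finite_iff_infinite.1 fun _ => hinf (Module.Finite.of_basis (Basis.ofVectorSpace ℂ V))
  set f : ℕ → V := Basis.ofVectorSpace ℂ V ∘ Infinite.natEmbedding _
  have hf : LinearIndependent ℂ f :=
    (Basis.ofVectorSpace ℂ V).linearIndependent.comp _ (Infinite.natEmbedding _).injective
  set u := InnerProductSpace.gramSchmidtNormed ℂ f
  have hu : Orthonormal ℂ fun n => (u n : H) :=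
    (InnerProductSpace.gramSchmidtNormed_orthonormal hf).comp_linearIsometry V.subtypeₗᵢ
  have hone : ∀ n, ‖T (u n)‖ ^ 2 = 1 := fun n => by
    rw [hV _ (u n).2, hu.1 n, one_pow]
  exact one_ne_zero ((summable_const_iff 1).1 ((hT.summable_of_orthonormal hu).congr hone))

theorem finiteDimensional_eigenspace {A : H →L[ℂ] H} {n : ℕ} (hA : IsHilbertSchmidt (A ^ n))
    {μ : ℂ} (hμ : ‖μ‖ = 1) : FiniteDimensional ℂ (Module.End.eigenspace (A : H →ₗ[ℂ] H) μ) :=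
  hA.finiteDimensional_of_norm_apply_eq fun x hx => by
    rw [pow_apply_of_mem_eigenspace hx, norm_smul, norm_pow, hμ, one_pow, one_mul]

end IsHilbertSchmidt

namespace IsTraceClass
variable {H : Type*} [NormedAddCommGroup H] [InnerProductSpace ℂ H] [CompleteSpace H]
  {ι : Type*} {W : H →L[ℂ] H}

theorem mul_left (hW : IsTraceClass W) (C : H →L[ℂ] H) : IsTraceClass (C * W) := by
  obtain ⟨X, Y, hX, hY, rfl⟩ := hW
  exact ⟨C * X, Y, hX.mul_left C, hY, (mul_assoc C X Y).symm⟩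

theorem mul_right (hW : IsTraceClass W) (C : H →L[ℂ] H) : IsTraceClass (W * C) := by
  obtain ⟨X, Y, hX, hY, rfl⟩ := hW
  exact ⟨X, Y * C, hX, hY.mul_right C, mul_assoc X Y C⟩

theorem pow_of_le {A : H →L[ℂ] H} {k n : ℕ} (hA : IsTraceClass (A ^ k)) (hkn : k ≤ n) :
    IsTraceClass (A ^ n) := by
  simpa [← pow_add, Nat.sub_add_cancel hkn] using hA.mul_left (A ^ (n - k))

theorem summable_norm_inner (hW : IsTraceClass W) (e : HilbertBasis ι ℂ H) :
    Summable fun i => ‖⟪e i, W (e i)⟫_ℂ‖ := by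
  obtain ⟨X, Y, hX, hY, rfl⟩ := hW
  exact hX.summable_norm_inner_mul hY e

theorem summable_inner (hW : IsTraceClass W) (e : HilbertBasis ι ℂ H) :
    Summable fun i => ⟪e i, W (e i)⟫_ℂ :=
  (hW.summable_norm_inner e).of_norm

theorem tsum_inner_mul_comm (hW : IsTraceClass W) (C : H →L[ℂ] H) (e : HilbertBasis ι ℂ H) :
    ∑' i, ⟪e i, (W * C) (e i)⟫_ℂ = ∑' i, ⟪e i, (C * W) (e i)⟫_ℂ := by
  obtain ⟨X, Y, hX, hY, rfl⟩ := hW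
  change ∑' i, ⟪e i, (X * Y * C) (e i)⟫_ℂ = ∑' i, ⟪e i, (C * (X * Y)) (e i)⟫_ℂ
  rw [mul_assoc, hX.tsum_inner_mul_comm (hY.mul_right C), mul_assoc,
    hY.tsum_inner_mul_comm (hX.mul_left C), mul_assoc]

theorem tsum_inner_mul_eq_zero_of_anticomm (hW : IsTraceClass W) {B : H →L[ℂ] H}
    (hB : B * W = -(W * B)) (e : HilbertBasis ι ℂ H) :
    ∑' i, ⟪e i, (W * B) (e i)⟫_ℂ = 0 := by
  have h := hW.tsum_inner_mul_comm B e
  simp only [hB, neg_apply, inner_neg_right, tsum_neg] at h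
  exact self_eq_neg.1 h

theorem isHilbertSchmidt (hW : IsTraceClass W) : IsHilbertSchmidt W := by
  obtain ⟨X, Y, -, hY, rfl⟩ := hW
  exact hY.mul_left X

theorem summable_norm_pow_apply_sq {A : H →L[ℂ] H} (hA : IsSelfAdjoint A) {n : ℕ}
    (h : IsTraceClass (A ^ (2 * n))) (e : HilbertBasis ι ℂ H) :
    Summable fun i => ‖(A ^ n) (e i)‖ ^ 2 :=
  (h.summable_norm_inner e).congr fun i => by
    rw [hA.inner_pow_two_mul_apply, RCLike.norm_ofReal, abs_of_nonneg (sq_nonneg _)]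

end IsTraceClass

section OddPowers
variable {H : Type*} [NormedAddCommGroup H] [InnerProductSpace ℂ H] [CompleteSpace H]
  {ι : Type*} {A B : H →L[ℂ] H}

theorem tsum_inner_pow_odd_succ_eq (hsq : A ^ 2 + B ^ 2 = 1) (hBA : B * A = -(A * B)) {l : ℕ}
    (hl : IsTraceClass (A ^ (2 * l + 1))) (e : HilbertBasis ι ℂ H) :
    ∑' i, ⟪e i, (A ^ (2 * (l + 1) + 1)) (e i)⟫_ℂ = ∑' i, ⟪e i, (A ^ (2 * l + 1)) (e i)⟫_ℂ := by
  set U := A ^ (2 * l + 1) * B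
  have hsplit : A ^ (2 * l + 1) = A ^ (2 * (l + 1) + 1) + U * B := by
    conv_lhs => rw [← mul_one (A ^ (2 * l + 1)), ← hsq]
    rw [mul_add, ← pow_add, sq B, ← mul_assoc, show 2 * l + 1 + 2 = 2 * (l + 1) + 1 by ring]
  have hU : B * U = -(U * B) := by
    rw [← mul_assoc, mul_pow_odd_of_mul_eq_neg hBA, neg_mul]
  have hsum : ∑' i, ⟪e i, (A ^ (2 * l + 1)) (e i)⟫_ℂ
      = ∑' i, ⟪e i, (A ^ (2 * (l + 1) + 1)) (e i)⟫_ℂ + ∑' i, ⟪e i, (U * B) (e i)⟫_ℂ := by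
    conv_lhs => rw [hsplit]
    simp only [add_apply, inner_add_right]
    exact ((hl.pow_of_le (by omega)).summable_inner e).tsum_add
      (((hl.mul_right B).mul_right B).summable_inner e)
  rw [hsum, (hl.mul_right B).tsum_inner_mul_eq_zero_of_anticomm hU e, add_zero]

theorem tsum_inner_pow_odd_eq (hsq : A ^ 2 + B ^ 2 = 1) (hBA : B * A = -(A * B)) {m l : ℕ}
    (hm : IsTraceClass (A ^ (2 * m + 1))) (hml : m ≤ l) (e : HilbertBasis ι ℂ H) :
    ∑' i, ⟪e i, (A ^ (2 * l + 1)) (e i)⟫_ℂ = ∑' i, ⟪e i, (A ^ (2 * m + 1)) (e i)⟫_ℂ := by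
  induction l, hml using Nat.le_induction with
  | base => rfl
  | succ l hml ih =>
    rw [tsum_inner_pow_odd_succ_eq hsq hBA (hm.pow_of_le (by omega)) e, ih]

end OddPowers

/-- Avron–Seiler–Simon: if `P − Q ∈ 𝔖_{2m+1}`, so that `(P−Q)^{2m+1}` is
trace class, then for every `l ≥ m` the trace of `(P−Q)^{2l+1}` (computed in any Hilbert
basis) equals the integer `ind(P,Q)`. -/
theorem trace_odd_power_eq_index {H : Type*} [NormedAddCommGroup H]
    [InnerProductSpace ℂ H] [CompleteSpace H]
    (P Q : H →L[ℂ] H)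
    (hPsa : IsSelfAdjoint P) (hPidem : IsIdempotentElem P)
    (hQsa : IsSelfAdjoint Q) (hQidem : IsIdempotentElem Q)
    (m : ℕ) (hTC : IsTraceClass ((P - Q) ^ (2 * m + 1))) :
    ∀ l : ℕ, m ≤ l → ∀ e : HilbertBasis ℕ ℂ H,
      Summable (fun i => (inner ℂ (e i) (((P - Q) ^ (2 * l + 1)) (e i)) : ℂ)) ∧
      ∑' i, (inner ℂ (e i) (((P - Q) ^ (2 * l + 1)) (e i)) : ℂ) = (pairIndex P Q : ℂ) := by
  intro l hml e
  have hA : IsSelfAdjoint (P - Q) := hPsa.sub hQsa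
  have hHS := hTC.isHilbertSchmidt
  have := hHS.finiteDimensional_eigenspace (μ := 1) (by simp)
  have := hHS.finiteDimensional_eigenspace (μ := -1) (by simp)
  refine ⟨(hTC.pow_of_le (by omega)).summable_inner e, ?_⟩
  set t : ℕ → ℂ := fun k => ∑' i, ⟪e i, ((P - Q) ^ (2 * k + 1)) (e i)⟫_ℂ
  have ht : ∀ k, m ≤ k → t k = t m := fun k hk =>
    tsum_inner_pow_odd_eq (hPidem.sub_sq_add_one_sub_sub_sq hQidem)
      (hPidem.one_sub_sub_mul_sub hQidem) hTC hk e
  have hlim := tendsto_tsum_inner_pow_odd hA (norm_sub_le_one hPsa hPidem hQsa hQidem) e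
    ((hTC.pow_of_le (by omega : 2 * m + 1 ≤ 2 * (m + 1))).summable_norm_pow_apply_sq hA e)
  have hconst : Tendsto t atTop (𝓝 (t l)) := tendsto_const_nhds.congr'
    (eventually_atTop.2 ⟨m, fun k hk => by rw [ht k hk, ht l hml]⟩)
  change t l = _
  rw [tendsto_nhds_unique hconst hlim,
    ((e.hasSum_inner_starProjection _).sub (e.hasSum_inner_starProjection _)).tsum_eq, pairIndex,
    ker_inf_range_eq_eigenspace_one hPsa hPidem hQsa hQidem,
    ker_inf_range_eq_eigenspace_neg_one hPsa hPidem hQsa hQidem]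
  push_cast
  rfl
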